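/- arXiv:2407.03803 — 4 statements merged into one kernel-verified Lean document; each statement's English description precedes it below -/
import Mathlib

section
/- For a p-form b on ℝ^(p+q) with the standard inner product, and orthonormal vectors v₁,…,v_q, the Hodge star satisfies |(∗b)(v₁,…,v_q)| = |b(w₁,…,w_p)| ≤ comass(b), where w₁,…,w_p complete the vᵢ to an orthonormal basis. Consequently comass(∗b) ≤ comass(b), where the comass of a k-form ω is the supremum of |ω(u₁,…,u_k)| over unit vectors uᵢ. -/
open scoped BigOperators RealInnerProductSpace

/-- Comass of a k-form on a real inner product space: the supremum of |ω(v₁,…,v_k)|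
over tuples of vectors of norm at most 1. -/
noncomputable def comass {E : Type*} [NormedAddCommGroup E] [InnerProductSpace ℝ E] {k : ℕ}
    (ω : E [⋀^Fin k]→ₗ[ℝ] ℝ) : ℝ :=
  sSup {r | ∃ v : Fin k → E, (∀ i, ‖v i‖ ≤ 1) ∧ r = |ω v|}

/-- Wedge product of real-valued alternating forms (shuffle convention, so that the
wedge of dual basis covectors evaluates as a determinant). -/
noncomputable def wedge {E : Type*} [AddCommGroup E] [Module ℝ E] {p q : ℕ}
    (a : E [⋀^Fin p]→ₗ[ℝ] ℝ) (b : E [⋀^Fin q]→ₗ[ℝ] ℝ) :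
    E [⋀^Fin (p + q)]→ₗ[ℝ] ℝ :=
  (TensorProduct.lid ℝ ℝ).toLinearMap.compAlternatingMap
    ((a.domCoprod b).domDomCongr finSumFinEquiv)

/-- The standard inner product of two k-forms on Euclidean n-space, for which the
increasing wedges of standard dual basis vectors are orthonormal. -/
noncomputable def formInner {n k : ℕ}
    (a b : (EuclideanSpace ℝ (Fin n)) [⋀^Fin k]→ₗ[ℝ] ℝ) : ℝ :=
  (1 / (k.factorial : ℝ)) *
    ∑ f : Fin k → Fin n,
      a (fun i => EuclideanSpace.single (f i) 1) * b (fun i => EuclideanSpace.single (f i) 1)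

/-- The standard volume form on Euclidean n-space. -/
noncomputable def vol (n : ℕ) : (EuclideanSpace ℝ (Fin n)) [⋀^Fin n]→ₗ[ℝ] ℝ :=
  (EuclideanSpace.basisFun (Fin n) ℝ).toBasis.det

/-! Test the defining identity `a ∧ ∗b = ⟨a, b⟩ vol` with `a = w₁♭ ∧ ⋯ ∧ w_p♭` (the form
`u ↦ det ⟪wᵢ, uⱼ⟫`, which represents evaluation at `w` for `formInner`) on the orthonormal
basis `(w, v)`: the left side is `(∗b)(v)`, the right side `b(w) · (±1)`.

For the comass, Gram–Schmidt applied to `u` writes `u = e R` with `e` an orthonormal `q`-frame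
and `R` upper triangular with diagonal entries `⟪eₖ, uₖ⟫`, so `|c(u)| = |det R| |c(e)| ≤ |c(e)|`
whenever `‖uₖ‖ ≤ 1`. Completing `e` to an orthonormal basis brings us back to the first part. -/

open Module

theorem AlternatingMap.apply_eq_sum_inner_orthonormalBasis {E ι κ : Type*}
    [NormedAddCommGroup E] [InnerProductSpace ℝ E] [Fintype ι] [DecidableEq ι] [Fintype κ]
    (ω : E [⋀^ι]→ₗ[ℝ] ℝ) (e : OrthonormalBasis κ ℝ E) (u : ι → E) :
    ω u = ∑ f : ι → κ, (∏ i, ⟪e (f i), u i⟫) * ω (e ∘ f) := by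
  conv_lhs => rw [← funext fun i => e.sum_repr' (u i)]
  rw [← ω.coe_multilinearMap, MultilinearMap.map_sum]
  refine Finset.sum_congr rfl fun f _ => ?_
  exact ω.toMultilinearMap.map_smul_univ _ _

theorem AlternatingMap.apply_sum_smul_eq_det_mul {R M : Type*} [CommRing R] [AddCommGroup M]
    [Module R M] {ι : Type*} [Fintype ι] [DecidableEq ι] (f : M [⋀^ι]→ₗ[R] R) (e : ι → M)
    (A : Matrix ι ι R) : f (fun k => ∑ i, A i k • e i) = A.det * f e := by
  have hcol : (fun k => ∑ i, A i k • e i) =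
      fun k => Fintype.linearCombination R e (fun i => A i k) := by
    ext k
    simp [Fintype.linearCombination_apply]
  rw [hcol, ← f.compLinearMap_apply,
    (f.compLinearMap (Fintype.linearCombination R e)).eq_smul_basis_det (Pi.basisFun R ι)]
  simp only [AlternatingMap.smul_apply, Pi.basisFun_det, smul_eq_mul]
  rw [mul_comm]
  congr 1
  · exact Matrix.det_transpose A
  · simp

theorem AlternatingMap.abs_apply_le_of_forall_orthonormal {E : Type*} [NormedAddCommGroup E]
    [InnerProductSpace ℝ E] [FiniteDimensional ℝ E] {q : ℕ} (hq : q ≤ finrank ℝ E)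
    (c : E [⋀^Fin q]→ₗ[ℝ] ℝ) {K : ℝ} (hK : ∀ v : Fin q → E, Orthonormal ℝ v → |c v| ≤ K)
    {u : Fin q → E} (hu : ∀ i, ‖u i‖ ≤ 1) : |c u| ≤ K := by
  obtain ⟨p, hp⟩ := Nat.exists_eq_add_of_le hq
  have hcard : finrank ℝ E = Fintype.card (Fin (q + p)) := by simp [hp]
  let g := InnerProductSpace.gramSchmidtOrthonormalBasis hcard (Fin.append u 0)
  have htri : ∀ k j, Fin.castAdd p k < j → ⟪g j, u k⟫ = 0 := fun k j hkj => by
    simpa using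
      InnerProductSpace.gramSchmidtOrthonormalBasis_inv_triangular hcard (Fin.append u 0) hkj
  let e : Fin q → E := fun i => g (Fin.castAdd p i)
  let R : Matrix (Fin q) (Fin q) ℝ := Matrix.of fun i k => ⟪e i, u k⟫
  have hRu : u = fun k => ∑ i, R i k • e i := by
    ext1 k
    have hhigh : ∑ j : Fin p, ⟪g (Fin.natAdd q j), u k⟫ • g (Fin.natAdd q j) = 0 :=
      Finset.sum_eq_zero fun j _ => by
        rw [htri k _ (Fin.lt_def.2 (by simp; omega)), zero_smul]
    rw [← g.sum_repr' (u k), Fin.sum_univ_add, hhigh, add_zero]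
    rfl
  have hR : R.IsUpperTriangular := fun i k hki => htri k _ (Fin.lt_def.2 (by simpa using hki))
  have hdet : |R.det| ≤ 1 := by
    rw [Matrix.det_of_isUpperTriangular hR, Finset.abs_prod]
    refine Finset.prod_le_one (fun _ _ => abs_nonneg _) fun k _ => ?_
    calc |⟪e k, u k⟫| ≤ ‖e k‖ * ‖u k‖ := abs_real_inner_le_norm _ _
      _ ≤ 1 := by simpa [e, g.orthonormal.1] using hu k
  have he : Orthonormal ℝ e := g.orthonormal.comp _ (Fin.castAdd_injective q p)
  calc |c u| = |R.det| * |c e| := by rw [hRu, c.apply_sum_smul_eq_det_mul, abs_mul]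
    _ ≤ 1 * K := mul_le_mul hdet (hK e he) (abs_nonneg _) zero_le_one
    _ = K := one_mul K

section Comass

variable {E : Type*} [NormedAddCommGroup E] [InnerProductSpace ℝ E] [FiniteDimensional ℝ E]
  {k : ℕ}

theorem bddAbove_comass_set (ω : E [⋀^Fin k]→ₗ[ℝ] ℝ) :
    BddAbove {r | ∃ v : Fin k → E, (∀ i, ‖v i‖ ≤ 1) ∧ r = |ω v|} := by
  let e := stdOrthonormalBasis ℝ E
  refine ⟨∑ f : Fin k → Fin (finrank ℝ E), |ω (e ∘ f)|, ?_⟩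
  rintro r ⟨u, hu, rfl⟩
  rw [ω.apply_eq_sum_inner_orthonormalBasis e]
  refine (Finset.abs_sum_le_sum_abs _ _).trans (Finset.sum_le_sum fun f _ => ?_)
  rw [abs_mul, Finset.abs_prod]
  refine mul_le_of_le_one_left (abs_nonneg _) (Finset.prod_le_one (fun _ _ => abs_nonneg _)
    fun i _ => (abs_real_inner_le_norm _ _).trans ?_)
  simpa [e.orthonormal.1] using hu i

theorem abs_apply_le_comass (ω : E [⋀^Fin k]→ₗ[ℝ] ℝ) {u : Fin k → E} (hu : ∀ i, ‖u i‖ ≤ 1) :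
    |ω u| ≤ comass ω :=
  le_csSup (bddAbove_comass_set ω) ⟨u, hu, rfl⟩

theorem comass_le_of_forall_orthonormal (hk : k ≤ finrank ℝ E) (ω : E [⋀^Fin k]→ₗ[ℝ] ℝ)
    {K : ℝ} (hK : ∀ v : Fin k → E, Orthonormal ℝ v → |ω v| ≤ K) : comass ω ≤ K := by
  refine csSup_le ⟨_, 0, fun _ => by simp, rfl⟩ ?_
  rintro r ⟨u, hu, rfl⟩
  exact ω.abs_apply_le_of_forall_orthonormal hk hK hu

end Comass

theorem Orthonormal.exists_orthonormal_sumElim {E : Type*} [NormedAddCommGroup E]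
    [InnerProductSpace ℝ E] [FiniteDimensional ℝ E] {p q : ℕ} (hE : finrank ℝ E = p + q)
    {v : Fin q → E} (hv : Orthonormal ℝ v) : ∃ w : Fin p → E, Orthonormal ℝ (Sum.elim w v) := by
  have hcard : finrank ℝ E = Fintype.card (Fin p ⊕ Fin q) := by simp [hE]
  have hrestr :
      Orthonormal ℝ ((Set.range Sum.inr).domRestrict (Sum.elim 0 v : Fin p ⊕ Fin q → E)) := by
    have h : (Set.range Sum.inr).domRestrict (Sum.elim 0 v : Fin p ⊕ Fin q → E) =
        v ∘ (Equiv.ofInjective _ Sum.inr_injective).symm := by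
      ext1 ⟨_, j, rfl⟩
      exact congrArg v (Equiv.ofInjective_symm_apply Sum.inr_injective j).symm
    rw [h]
    exact hv.comp _ (Equiv.injective _)
  obtain ⟨b, hb⟩ := hrestr.exists_orthonormalBasis_extension_of_card_eq hcard
  refine ⟨b ∘ Sum.inl, ?_⟩
  convert b.orthonormal using 1
  ext (i | j)
  · rfl
  · exact (hb _ ⟨j, rfl⟩).symm

theorem MultilinearMap.sum_alternatization_mul {M ι κ : Type*} [AddCommGroup M] [Module ℝ M]
    [Fintype ι] [DecidableEq ι] [Fintype κ]
    (m : MultilinearMap ℝ (fun _ : ι => M) ℝ) (b : M [⋀^ι]→ₗ[ℝ] ℝ) (x : κ → M) :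
    ∑ f : ι → κ, m.alternatization (x ∘ f) * b (x ∘ f) =
      (Fintype.card ι).factorial * ∑ f : ι → κ, m (x ∘ f) * b (x ∘ f) := by
  calc ∑ f : ι → κ, m.alternatization (x ∘ f) * b (x ∘ f)
      = ∑ σ : Equiv.Perm ι, ∑ f : ι → κ, m (x ∘ (f ∘ σ)) * b (x ∘ (f ∘ σ)) := by
        rw [Finset.sum_comm]
        refine Finset.sum_congr rfl fun f _ => ?_
        rw [alternatization_apply, Finset.sum_mul]
        refine Finset.sum_congr rfl fun σ _ => ?_
        rw [← Function.comp_assoc, b.map_perm]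
        simp only [domDomCongr_apply, Units.smul_def, zsmul_eq_mul, Function.comp_apply]
        show _ = m (fun i => x (f (σ i))) * _
        ring
    _ = ∑ σ : Equiv.Perm ι, ∑ f : ι → κ, m (x ∘ f) * b (x ∘ f) := by
        refine Finset.sum_congr rfl fun σ _ => ?_
        exact (Equiv.arrowCongr σ.symm (Equiv.refl κ)).sum_comp (fun f => m (x ∘ f) * b (x ∘ f))
    _ = _ := by simp [Fintype.card_perm]

noncomputable def flatWedge {E ι : Type*} [NormedAddCommGroup E] [InnerProductSpace ℝ E]
    [Fintype ι] [DecidableEq ι] (w : ι → E) : E [⋀^ι]→ₗ[ℝ] ℝ :=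
  MultilinearMap.alternatization
    ((MultilinearMap.mkPiAlgebra ℝ ι ℝ).compLinearMap fun i => innerₗ E (w i))

section FlatWedge

variable {E ι : Type*} [NormedAddCommGroup E] [InnerProductSpace ℝ E] [Fintype ι]
  [DecidableEq ι]

theorem flatWedge_apply (w u : ι → E) :
    flatWedge w u = ∑ σ : Equiv.Perm ι, Equiv.Perm.sign σ • ∏ i, ⟪w i, u (σ i)⟫ := by
  simp [flatWedge, MultilinearMap.alternatization_apply]

theorem flatWedge_eq_zero_of_forall_inner_eq_zero {w u : ι → E} {t : ι}
    (h : ∀ i, ⟪w i, u t⟫ = 0) : flatWedge w u = 0 := by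
  rw [flatWedge_apply]
  refine Finset.sum_eq_zero fun σ _ => ?_
  rw [Finset.prod_eq_zero (Finset.mem_univ (σ.symm t)) (by simpa using h _), smul_zero]

theorem flatWedge_self {w : ι → E} (hw : Orthonormal ℝ w) : flatWedge w w = 1 := by
  rw [flatWedge_apply, Fintype.sum_eq_single 1 fun σ hσ => ?_]
  · simp [hw.1]
  · obtain ⟨i, hi⟩ : ∃ i, σ i ≠ i := by
      by_contra! h
      exact hσ (Equiv.ext h)
    rw [Finset.prod_eq_zero (Finset.mem_univ i) (hw.2 hi.symm), smul_zero]

theorem sum_flatWedge_mul {κ : Type*} [Fintype κ] (e : OrthonormalBasis κ ℝ E) (w : ι → E)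
    (b : E [⋀^ι]→ₗ[ℝ] ℝ) :
    ∑ f : ι → κ, flatWedge w (e ∘ f) * b (e ∘ f) = (Fintype.card ι).factorial * b w := by
  rw [flatWedge, MultilinearMap.sum_alternatization_mul,
    b.apply_eq_sum_inner_orthonormalBasis e w]
  congr 1
  refine Finset.sum_congr rfl fun f _ => ?_
  simp [real_inner_comm]

end FlatWedge

theorem formInner_flatWedge {n k : ℕ} (w : Fin k → EuclideanSpace ℝ (Fin n))
    (b : (EuclideanSpace ℝ (Fin n)) [⋀^Fin k]→ₗ[ℝ] ℝ) : formInner (flatWedge w) b = b w := by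
  have h := sum_flatWedge_mul (EuclideanSpace.basisFun (Fin n) ℝ) w b
  simp only [Fintype.card_fin, Function.comp_def, EuclideanSpace.basisFun_apply] at h
  rw [formInner, h]
  field_simp

theorem AlternatingMap.domCoprod_apply_of_eq_zero {R M N₁ N₂ ιa ιb : Type*} [CommRing R]
    [AddCommGroup M] [Module R M] [AddCommGroup N₁] [Module R N₁] [AddCommGroup N₂]
    [Module R N₂] [Fintype ιa] [Fintype ιb] [DecidableEq ιa] [DecidableEq ιb]
    (a : M [⋀^ιa]→ₗ[R] N₁) (c : M [⋀^ιb]→ₗ[R] N₂) (m : ιa ⊕ ιb → M)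
    (ha : ∀ u : ιa → M, (∃ i j, u i = m (Sum.inr j)) → a u = 0) :
    a.domCoprod c m = a (m ∘ Sum.inl) ⊗ₜ[R] c (m ∘ Sum.inr) := by
  classical
  rw [AlternatingMap.domCoprod_apply, sum_apply]
  refine (Fintype.sum_eq_single (Quotient.mk'' 1) fun σ hσ => ?_).trans ?_
  · induction σ using Quotient.inductionOn' with
    | h π =>
      rw [AlternatingMap.domCoprod.summand_mk'']
      rcases em (∃ i j, π (Sum.inl i) = Sum.inr j) with ⟨i, j, hij⟩ | hc
      · have h0 : a (fun i => m (π (Sum.inl i))) = 0 := ha _ ⟨i, j, by rw [hij]⟩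
        simp [MultilinearMap.domDomCongr_apply, MultilinearMap.domCoprod_apply, h0]
      · have hmaps : Set.MapsTo π (Set.range Sum.inl) (Set.range Sum.inl) := by
          rintro x ⟨i, rfl⟩
          rcases h : π (Sum.inl i) with l | r
          · exact ⟨l, rfl⟩
          · exact (hc ⟨i, r, h⟩).elim
        have hmem := Equiv.Perm.mem_sumCongrHom_range_of_perm_mapsTo_inl hmaps
        exact (hσ (Quotient.sound' (QuotientGroup.leftRel_apply.mpr
          (by simpa using inv_mem hmem)))).elim
  · rw [AlternatingMap.domCoprod.summand_mk'']
    simp [MultilinearMap.domDomCongr_apply, MultilinearMap.domCoprod_apply]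
    rfl

theorem wedge_apply_sumElim_of_eq_zero {E : Type*} [AddCommGroup E] [Module ℝ E] {p q : ℕ}
    (a : E [⋀^Fin p]→ₗ[ℝ] ℝ) (c : E [⋀^Fin q]→ₗ[ℝ] ℝ) (w : Fin p → E) (v : Fin q → E)
    (ha : ∀ u : Fin p → E, (∃ i j, u i = v j) → a u = 0) :
    wedge a c (Sum.elim w v ∘ finSumFinEquiv.symm) = a w * c v := by
  have hm : (Sum.elim w v ∘ finSumFinEquiv.symm) ∘ finSumFinEquiv = Sum.elim w v := by
    ext1 s
    simp
  rw [wedge, LinearMap.compAlternatingMap_apply, AlternatingMap.domDomCongr_apply, hm,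
    AlternatingMap.domCoprod_apply_of_eq_zero a c _ ha]
  simp

theorem abs_vol_apply_of_orthonormal {n : ℕ} {u : Fin n → EuclideanSpace ℝ (Fin n)}
    (hu : Orthonormal ℝ u) : |vol n u| = 1 := by
  let U := OrthonormalBasis.mk hu
    (hu.linearIndependent.span_eq_top_of_card_eq_finrank' (by simp)).ge
  simpa [vol, U] using (EuclideanSpace.basisFun (Fin n) ℝ).det_to_matrix_orthonormalBasis U

theorem abs_hodge_apply_eq {p q : ℕ}
    (hodge : ((EuclideanSpace ℝ (Fin (p + q))) [⋀^Fin p]→ₗ[ℝ] ℝ) →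
      ((EuclideanSpace ℝ (Fin (p + q))) [⋀^Fin q]→ₗ[ℝ] ℝ))
    (hhodge : ∀ (a : (EuclideanSpace ℝ (Fin (p + q))) [⋀^Fin p]→ₗ[ℝ] ℝ)
      (b : (EuclideanSpace ℝ (Fin (p + q))) [⋀^Fin p]→ₗ[ℝ] ℝ),
      wedge a (hodge b) = formInner a b • vol (p + q))
    (b : (EuclideanSpace ℝ (Fin (p + q))) [⋀^Fin p]→ₗ[ℝ] ℝ)
    {v : Fin q → EuclideanSpace ℝ (Fin (p + q))} {w : Fin p → EuclideanSpace ℝ (Fin (p + q))}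
    (hON : Orthonormal ℝ (Sum.elim w v)) :
    |hodge b v| = |b w| := by
  have hw : Orthonormal ℝ w := hON.comp Sum.inl Sum.inl_injective
  have hvanish : ∀ u : Fin p → EuclideanSpace ℝ (Fin (p + q)), (∃ i j, u i = v j) →
      flatWedge w u = 0 := by
    rintro u ⟨t, j, hj⟩
    refine flatWedge_eq_zero_of_forall_inner_eq_zero (t := t) fun i => ?_
    rw [hj]
    exact hON.2 (Sum.inl_ne_inr (a := i) (b := j))
  have h := DFunLike.congr_fun (hhodge (flatWedge w) b) (Sum.elim w v ∘ finSumFinEquiv.symm)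
  rw [wedge_apply_sumElim_of_eq_zero _ _ w v hvanish, flatWedge_self hw, one_mul,
    AlternatingMap.smul_apply, formInner_flatWedge, smul_eq_mul] at h
  rw [h, abs_mul, abs_vol_apply_of_orthonormal (hON.comp _ finSumFinEquiv.symm.injective), mul_one]

/-- If `hodge` is a Hodge star operator from p-forms to q-forms on
ℝ^(p+q) (characterized by a ∧ ∗b = ⟨a,b⟩ vol), and the orthonormal vectors v₁,…,v_q
are completed to an orthonormal basis by w₁,…,w_p, then
|(∗b)(v₁,…,v_q)| = |b(w₁,…,w_p)| ≤ comass b; consequently comass(∗b) ≤ comass(b). -/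
theorem hodge_star_eval_eq_and_comass_le (p q : ℕ)
    (hodge : ((EuclideanSpace ℝ (Fin (p + q))) [⋀^Fin p]→ₗ[ℝ] ℝ) →
      ((EuclideanSpace ℝ (Fin (p + q))) [⋀^Fin q]→ₗ[ℝ] ℝ))
    (hhodge : ∀ (a : (EuclideanSpace ℝ (Fin (p + q))) [⋀^Fin p]→ₗ[ℝ] ℝ)
      (b : (EuclideanSpace ℝ (Fin (p + q))) [⋀^Fin p]→ₗ[ℝ] ℝ),
      wedge a (hodge b) = formInner a b • vol (p + q))
    (b : (EuclideanSpace ℝ (Fin (p + q))) [⋀^Fin p]→ₗ[ℝ] ℝ)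
    (v : Fin q → EuclideanSpace ℝ (Fin (p + q)))
    (w : Fin p → EuclideanSpace ℝ (Fin (p + q)))
    (hON : Orthonormal ℝ (Sum.elim w v)) :
    |(hodge b) v| = |b w| ∧ |b w| ≤ comass b ∧ comass (hodge b) ≤ comass b := by
  have hbound : ∀ {v' : Fin q → EuclideanSpace ℝ (Fin (p + q))}
      {w' : Fin p → EuclideanSpace ℝ (Fin (p + q))}, Orthonormal ℝ (Sum.elim w' v') →
      |(hodge b) v'| = |b w'| ∧ |b w'| ≤ comass b := fun hON' =>
    ⟨abs_hodge_apply_eq hodge hhodge b hON',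
      abs_apply_le_comass b fun i => ((hON'.comp Sum.inl Sum.inl_injective).1 i).le⟩
  refine ⟨(hbound hON).1, (hbound hON).2,
    comass_le_of_forall_orthonormal (by simp) _ fun v' hv' => ?_⟩
  obtain ⟨w', hw'⟩ := hv'.exists_orthonormal_sumElim (p := p) (by simp)
  exact (hbound hw').1 ▸ (hbound hw').2
end

section
/- For any n 2-forms ω₁,…,ω_n on a Euclidean vector space ℝ^m, the comass of their wedge product satisfies comass(ω₁ ∧ ⋯ ∧ ω_n) ≤ n! · comass(ω₁) ⋯ comass(ω_n). -/
open scoped BigOperators RealInnerProductSpace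

/-- The n-fold wedge product of 2-forms. -/
noncomputable def wedgeMany {E : Type*} [AddCommGroup E] [Module ℝ E] :
    ∀ n : ℕ, (Fin n → (E [⋀^Fin 2]→ₗ[ℝ] ℝ)) → (E [⋀^Fin (2 * n)]→ₗ[ℝ] ℝ)
  | 0, _ => AlternatingMap.constOfIsEmpty ℝ E (Fin 0) 1
  | n + 1, ω => wedge (wedgeMany n fun i => ω i.castSucc) (ω (Fin.last n))

/-!
Induct on `n`. The inductive step is `comass (B ∧ a) ≤ (p + 2) / 2 · comass B · comass a` for a
`p`-form `B` and a 2-form `a`. To evaluate `B ∧ a` on linearly independent unit-bounded vectors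
`v`, restrict everything to `W = span v`: there `B ∧ a` is a multiple of the volume form, so by
Hadamard's inequality it suffices to evaluate it on a single orthonormal basis of `W`, which we
choose to put `a|_W` in its normal form of `2 × 2` skew blocks (built from eigenvectors of `L²`,
where `L` is the skew operator of `a`). Expanding the wedge as a sum over permutations, a term
survives only if the two slots of `a` receive a block, and counting these permutations gives the
factor `(p + 2) / 2`.
-/

open Module Submodule Set Equiv

section Comass

variable {F : Type*} [NormedAddCommGroup F] [InnerProductSpace ℝ F] {k : ℕ}

lemma abs_apply_le_sum_orthonormalBasis {ι : Type*} [Fintype ι] (b : OrthonormalBasis ι ℝ F)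
    (ω : F [⋀^Fin k]→ₗ[ℝ] ℝ) {v : Fin k → F} (hv : ∀ i, ‖v i‖ ≤ 1) :
    |ω v| ≤ ∑ r : Fin k → ι, |ω (b ∘ r)| := by
  have hexp : ω v = ∑ r : Fin k → ι, (∏ i, ⟪b (r i), v i⟫) * ω (b ∘ r) := by
    conv_lhs => rw [show v = fun i => ∑ j, ⟪b j, v i⟫ • b j from
      funext fun i => (b.sum_repr' (v i)).symm]
    rw [← ω.coe_multilinearMap, MultilinearMap.map_sum]
    exact Finset.sum_congr rfl fun r _ => ω.toMultilinearMap.map_smul_univ _ _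
  rw [hexp]
  refine (Finset.abs_sum_le_sum_abs _ _).trans (Finset.sum_le_sum fun r _ => ?_)
  rw [abs_mul, Finset.abs_prod]
  refine mul_le_of_le_one_left (abs_nonneg _)
    (Finset.prod_le_one (fun _ _ => abs_nonneg _) fun i _ => ?_)
  calc |⟪b (r i), v i⟫| ≤ ‖b (r i)‖ * ‖v i‖ := abs_real_inner_le_norm _ _
    _ ≤ 1 := by rw [b.orthonormal.1, one_mul]; exact hv i

lemma le_comass [FiniteDimensional ℝ F] (ω : F [⋀^Fin k]→ₗ[ℝ] ℝ) {v : Fin k → F}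
    (hv : ∀ i, ‖v i‖ ≤ 1) : |ω v| ≤ comass ω :=
  le_csSup ⟨_, by
    rintro _ ⟨v, hv, rfl⟩
    exact abs_apply_le_sum_orthonormalBasis (stdOrthonormalBasis ℝ F) ω hv⟩ ⟨v, hv, rfl⟩

lemma comass_le (ω : F [⋀^Fin k]→ₗ[ℝ] ℝ) {C : ℝ}
    (h : ∀ v : Fin k → F, (∀ i, ‖v i‖ ≤ 1) → |ω v| ≤ C) : comass ω ≤ C :=
  csSup_le ⟨_, 0, fun _ => by simp, rfl⟩ fun _ ⟨v, hv, hr⟩ => hr ▸ h v hv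

lemma comass_nonneg (ω : F [⋀^Fin k]→ₗ[ℝ] ℝ) : 0 ≤ comass ω :=
  Real.sSup_nonneg fun _ ⟨_, _, hr⟩ => hr ▸ abs_nonneg _

lemma comass_compLinearMap_le {F' : Type*} [NormedAddCommGroup F'] [InnerProductSpace ℝ F']
    [FiniteDimensional ℝ F] (ω : F [⋀^Fin k]→ₗ[ℝ] ℝ) (g : F' →ₗᵢ[ℝ] F) :
    comass (ω.compLinearMap g.toLinearMap) ≤ comass ω :=
  comass_le _ fun v hv => le_comass ω fun i => (g.norm_map (v i)).trans_le (hv i)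

/-- Hadamard's inequality, for a top-degree form instead of the determinant. -/
lemma abs_apply_le_of_orthonormal (hk : finrank ℝ F = k) (ω : F [⋀^Fin k]→ₗ[ℝ] ℝ)
    {f : Fin k → F} (hf : Orthonormal ℝ f) (v : Fin k → F) : |ω v| ≤ |ω f| * ∏ i, ‖v i‖ := by
  obtain _ | k := k
  · simp [Subsingleton.elim v f]
  have : Fact (finrank ℝ F = k + 1) := ⟨hk⟩
  let b := OrthonormalBasis.mk hf
    (hf.linearIndependent.span_eq_top_of_card_eq_finrank (by simp [hk])).ge
  have hω : ω = ω f • b.toBasis.orientation.volumeForm := by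
    rw [b.toBasis.orientation.volumeForm_robust b rfl]
    convert ω.eq_smul_basis_det b.toBasis
    simp [b]
  conv_lhs => rw [hω]
  simp only [AlternatingMap.smul_apply, smul_eq_mul, abs_mul]
  exact mul_le_mul_of_nonneg_left (Orientation.abs_volumeForm_apply_le _ v) (abs_nonneg _)

end Comass

section TwoForm

variable {R M N : Type*} [CommRing R] [AddCommGroup M] [Module R M] [AddCommGroup N] [Module R N]

lemma AlternatingMap.map_fin_two_swap (a : M [⋀^Fin 2]→ₗ[R] N) (x y : M) :
    a ![x, y] = -a ![y, x] := by
  rw [← a.map_swap ![y, x] Fin.zero_ne_one]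
  congr 1
  ext i
  fin_cases i <;> rfl

lemma AlternatingMap.map_fin_two_self (a : M [⋀^Fin 2]→ₗ[R] N) (x : M) : a ![x, x] = 0 :=
  a.map_eq_zero_of_eq ![x, x] (i := 0) (j := 1) rfl Fin.zero_ne_one

/-- Each row of the matrix `a (f i) (f j)` has at most one nonzero entry: up to reordering, the
block-diagonal normal form of a skew-symmetric matrix. -/
def IsPaired {ι : Type*} (a : M [⋀^Fin 2]→ₗ[R] N) (f : ι → M) : Prop :=
  ∀ i, ∃ j, ∀ k, k ≠ j → a ![f i, f k] = 0

lemma isPaired_fin_two (a : M [⋀^Fin 2]→ₗ[R] N) (g : Fin 2 → M) : IsPaired a g := by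
  intro i
  refine ⟨i.rev, fun k hk => ?_⟩
  obtain rfl : k = i := by fin_cases i <;> fin_cases k <;> simp_all
  exact a.map_fin_two_self _

lemma IsPaired.append {m n : ℕ} {a : M [⋀^Fin 2]→ₗ[R] N} {g : Fin m → M} {g' : Fin n → M}
    (hg : IsPaired a g) (hg' : IsPaired a g') (h : ∀ i j, a ![g i, g' j] = 0) :
    IsPaired a (Fin.append g g') := by
  intro i
  induction i using Fin.addCases with
  | left i =>
    obtain ⟨j, hj⟩ := hg i
    refine ⟨Fin.castAdd n j, fun k hk => ?_⟩
    induction k using Fin.addCases with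
    | left k => simpa using hj k (by rintro rfl; exact hk rfl)
    | right k => simpa using h i k
  | right i =>
    obtain ⟨j, hj⟩ := hg' i
    refine ⟨Fin.natAdd m j, fun k hk => ?_⟩
    induction k using Fin.addCases with
    | left k => simp [a.map_fin_two_swap (g' i), h]
    | right k => simpa using hj k (by rintro rfl; exact hk rfl)

end TwoForm

section NormalForm

variable {F : Type*} [NormedAddCommGroup F] [InnerProductSpace ℝ F]

lemma Orthonormal.append {m n : ℕ} {g : Fin m → F} {g' : Fin n → F} (hg : Orthonormal ℝ g)
    (hg' : Orthonormal ℝ g') (h : ∀ i j, ⟪g i, g' j⟫ = 0) :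
    Orthonormal ℝ (Fin.append g g') := by
  rw [orthonormal_iff_ite] at *
  intro i j
  induction i using Fin.addCases <;> induction j using Fin.addCases <;>
    simp [hg, hg', h, real_inner_comm (g _), Fin.ext_iff] <;> omega

variable [FiniteDimensional ℝ F]

lemma exists_linearMap_inner_eq (β : F →ₗ[ℝ] F →ₗ[ℝ] ℝ) :
    ∃ L : F →ₗ[ℝ] F, ∀ x y, ⟪L x, y⟫ = β x y := by
  have h : (innerₗ F).Nondegenerate :=
    ⟨fun x h => inner_self_eq_zero.mp (h x), fun x h => inner_self_eq_zero.mp (h x)⟩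
  exact ⟨_, fun x y => LinearMap.BilinForm.symmCompOfNondegenerate_left_apply β h y x⟩

lemma AlternatingMap.exists_linearMap_inner_eq (a : F [⋀^Fin 2]→ₗ[ℝ] ℝ) :
    ∃ L : F →ₗ[ℝ] F, ∀ x y, ⟪L x, y⟫ = a ![x, y] := by
  obtain ⟨L, hL⟩ := _root_.exists_linearMap_inner_eq
    (LinearMap.mk₂ ℝ (fun x y => a.curryLeft x ![y]) (fun _ _ _ => by simp)
      (fun _ _ _ => by simp) (fun x _ _ => (a.curryLeft x).map_vecCons_add _ _ _)
      (fun _ x _ => (a.curryLeft x).map_vecCons_smul _ _ _))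
  exact ⟨L, fun x y => by simpa using hL x y⟩

lemma exists_invariant_orthonormal_pair (a : F [⋀^Fin 2]→ₗ[ℝ] ℝ) (ha : a ≠ 0) :
    ∃ g : Fin 2 → F, Orthonormal ℝ g ∧ ∀ i, ∀ z ∈ (span ℝ (range g))ᗮ, a ![g i, z] = 0 := by
  obtain ⟨L, hL⟩ := a.exists_linearMap_inner_eq
  have hS : (L ∘ₗ L).IsSymmetric := fun x y => by
    rw [LinearMap.comp_apply, LinearMap.comp_apply, hL, real_inner_comm, hL,
      a.map_fin_two_swap, a.map_fin_two_swap (L y), ← hL, ← hL, real_inner_comm]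
  let b := hS.eigenvectorBasis rfl
  obtain ⟨i, hi⟩ : ∃ i, L (b i) ≠ 0 := by
    by_contra! h
    obtain rfl : L = 0 := b.toBasis.ext fun i => by simpa using h i
    refine ha (AlternatingMap.ext fun v => ?_)
    have hv : v = ![v 0, v 1] := by ext i; fin_cases i <;> rfl
    rw [hv, ← hL]
    simp
  -- `u` is an eigenvector of `L²` not killed by `L`, so `span {u, L u}` is `L`-invariant.
  set u := b i
  have hu : ‖u‖ = 1 := b.orthonormal.1 i
  set c := ‖L u‖
  have hc : 0 < c := norm_pos_iff.mpr hi
  have hLu : L u = c • (c⁻¹ • L u) := by rw [smul_smul, mul_inv_cancel₀ hc.ne', one_smul]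
  have hLLu : L (L u) = hS.eigenvalues rfl i • u := hS.apply_eigenvectorBasis rfl i
  have huLu : ⟪u, L u⟫ = 0 := by rw [real_inner_comm, hL, a.map_fin_two_self]
  refine ⟨![u, c⁻¹ • L u], ?_, ?_⟩
  · rw [orthonormal_iff_ite]
    intro j k
    fin_cases j <;> fin_cases k <;>
      simp [hu, real_inner_smul_right, huLu, real_inner_comm u, norm_smul, hc.ne', c]
  · intro j z hz
    have h0 : ⟪u, z⟫ = 0 := inner_right_of_mem_orthogonal (subset_span (mem_range_self 0)) hz
    have h1 : ⟪c⁻¹ • L u, z⟫ = 0 :=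
      inner_right_of_mem_orthogonal (subset_span (mem_range_self 1)) hz
    fin_cases j
    · change a ![u, z] = 0
      rw [← hL, hLu, real_inner_smul_left, h1, mul_zero]
    · simp [← hL, hLLu, real_inner_smul_left, h0]

theorem exists_orthonormal_isPaired (a : F [⋀^Fin 2]→ₗ[ℝ] ℝ) {d : ℕ} (hd : finrank ℝ F = d) :
    ∃ f : Fin d → F, Orthonormal ℝ f ∧ IsPaired a f := by
  induction d using Nat.strong_induction_on generalizing F with
  | _ d ih =>
  by_cases ha : a = 0
  · subst ha
    exact ⟨(stdOrthonormalBasis ℝ F).reindex (finCongr hd), OrthonormalBasis.orthonormal _,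
      fun i => ⟨i, fun _ _ => rfl⟩⟩
  obtain ⟨g, hg, hga⟩ := exists_invariant_orthonormal_pair a ha
  set P := span ℝ (range g)
  have hP : finrank ℝ P = 2 := by rw [finrank_span_eq_card hg.linearIndependent]; simp
  obtain rfl : 2 + finrank ℝ Pᗮ = d := by
    rw [← hP, Submodule.finrank_add_finrank_orthogonal, hd]
  obtain ⟨f, hf, hfa⟩ := ih _ (by omega) (a.compLinearMap Pᗮ.subtype) rfl
  refine ⟨Fin.append g (Pᗮ.subtype ∘ f),
    hg.append (hf.comp_linearIsometry Pᗮ.subtypeₗᵢ) fun i j => ?_,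
    (isPaired_fin_two a g).append (fun i => (hfa i).imp fun j hj k hk => ?_)
      fun i j => hga i _ (f j).2⟩
  · exact inner_right_of_mem_orthogonal (subset_span (mem_range_self i)) (f j).2
  · have hpair : (fun l => (![f i, f k] l : F)) = ![(f i : F), f k] := by
      funext l
      fin_cases l <;> rfl
    simpa [hpair] using hj k hk

end NormalForm

section Permutations

variable {ι : Type*} [Fintype ι] [DecidableEq ι]

lemma sum_perm_apply_apply_eq_of_ne {M : Type*} [AddCommMonoid M] (G : ι → ι → M)
    {x y x' y' : ι} (hxy : x ≠ y) (hxy' : x' ≠ y') :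
    ∑ σ : Perm ι, G (σ x) (σ y) = ∑ σ : Perm ι, G (σ x') (σ y') := by
  obtain ⟨ρ, hρ⟩ := Perm.exists_extending_pair ![x', y'] ![x, y] (by simp [hxy']) (by simp [hxy])
  have hx : ρ x' = x := hρ 0
  have hy : ρ y' = y := hρ 1
  conv_rhs => rw [← Equiv.sum_comp (Equiv.mulRight ρ)]
  simp [hx, hy]

theorem sum_perm_apply_apply {R : Type*} [Field R] [CharZero R] (G : ι → ι → R)
    (hG : ∀ s, G s s = 0) {x y : ι} (hxy : x ≠ y) :
    ∑ σ : Perm ι, G (σ x) (σ y) = (Fintype.card ι - 2).factorial * ∑ s, ∑ t, G s t := by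
  set S := ∑ σ : Perm ι, G (σ x) (σ y)
  -- Double counting over all pairs `(x', y')`: each off-diagonal pair contributes `S`.
  have hsum : ∑ x', ∑ y', ∑ σ : Perm ι, G (σ x') (σ y') =
      (Fintype.card ι).factorial * ∑ s, ∑ t, G s t := by
    have hσ (σ : Perm ι) : ∑ x', ∑ y', G (σ x') (σ y') = ∑ s, ∑ t, G s t := by
      rw [← Equiv.sum_comp σ fun s => ∑ t, G s t]
      exact Finset.sum_congr rfl fun x' _ => Equiv.sum_comp σ (G (σ x'))
    rw [Finset.sum_congr rfl fun _ _ => Finset.sum_comm, Finset.sum_comm]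
    simp [hσ, Fintype.card_perm]
  have hoff : ∀ x' y', ∑ σ : Perm ι, G (σ x') (σ y') = if x' = y' then 0 else S := by
    intro x' y'
    split_ifs with h
    · simp [h, hG]
    · exact sum_perm_apply_apply_eq_of_ne G h hxy
  simp only [hoff, Finset.sum_ite, Finset.sum_const_zero, zero_add, Finset.sum_const,
    Finset.filter_ne, Finset.card_erase_of_mem (Finset.mem_univ _), Finset.card_univ] at hsum
  obtain ⟨k, hk⟩ : ∃ k, Fintype.card ι = k + 2 :=
    ⟨_, (Nat.sub_add_cancel (Fintype.one_lt_card_iff.mpr ⟨x, y, hxy⟩)).symm⟩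
  rw [hk, Nat.factorial_succ, Nat.factorial_succ, show k + 2 - 1 = k + 1 by omega] at hsum
  rw [hk, Nat.add_sub_cancel]
  simp only [nsmul_eq_mul, Nat.cast_mul, Nat.cast_add, Nat.cast_ofNat, Nat.cast_one] at hsum
  have hne : ((k + 2 : R) * (k + 1)) ≠ 0 := by norm_cast
  exact mul_left_cancel₀ hne (by linear_combination hsum)

end Permutations

section Wedge

variable {E : Type*} [AddCommGroup E] [Module ℝ E] {p q : ℕ}

theorem factorial_mul_wedge_apply (a : E [⋀^Fin p]→ₗ[ℝ] ℝ) (b : E [⋀^Fin q]→ₗ[ℝ] ℝ)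
    (v : Fin (p + q) → E) :
    (p.factorial * q.factorial : ℝ) * wedge a b v =
      ∑ σ : Perm (Fin (p + q)), (Perm.sign σ : ℝ) *
        (a (fun i => v (σ (Fin.castAdd q i))) * b (fun j => v (σ (Fin.natAdd p j)))) := by
  have h := congrArg (fun φ => TensorProduct.lid ℝ ℝ (φ (v ∘ finSumFinEquiv)))
    (MultilinearMap.domCoprod_alternization_eq a b)
  simp only [MultilinearMap.alternatization_apply, AlternatingMap.smul_apply, map_nsmul, map_sum,
    Fintype.card_fin] at h
  rw [← Equiv.sum_comp finSumFinEquiv.permCongr]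
  calc _ = (p.factorial * q.factorial) •
        TensorProduct.lid ℝ ℝ ((a.domCoprod b) (v ∘ finSumFinEquiv)) := by
        rw [nsmul_eq_mul]
        push_cast
        rfl
    _ = _ := h.symm
    _ = _ := Finset.sum_congr rfl fun σ _ => by
        rw [Units.smul_def, map_zsmul]
        simp [Perm.sign_permCongr, zsmul_eq_mul]

lemma wedge_compLinearMap_apply {E' : Type*} [AddCommGroup E'] [Module ℝ E']
    (a : E [⋀^Fin p]→ₗ[ℝ] ℝ) (b : E [⋀^Fin q]→ₗ[ℝ] ℝ) (g : E' →ₗ[ℝ] E)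
    (v : Fin (p + q) → E') :
    wedge (a.compLinearMap g) (b.compLinearMap g) v = wedge a b (g ∘ v) :=
  mul_left_cancel₀ (by positivity : (p.factorial * q.factorial : ℝ) ≠ 0)
    ((factorial_mul_wedge_apply _ _ v).trans (factorial_mul_wedge_apply a b (g ∘ v)).symm)

end Wedge

section WedgeBound

variable {F : Type*} [NormedAddCommGroup F] [InnerProductSpace ℝ F] [FiniteDimensional ℝ F]
  {p : ℕ}

lemma sum_perm_abs_apply_le_of_isPaired {ι : Type*} [Fintype ι] [DecidableEq ι]
    (a : F [⋀^Fin 2]→ₗ[ℝ] ℝ) {f : ι → F} (hf : ∀ i, ‖f i‖ ≤ 1) (hfa : IsPaired a f)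
    {x y : ι} (hxy : x ≠ y) :
    ∑ σ : Perm ι, |a ![f (σ x), f (σ y)]| ≤
      (Fintype.card ι - 2).factorial * (Fintype.card ι * comass a) := by
  rw [sum_perm_apply_apply (fun s t => |a ![f s, f t]|) (by simp [a.map_fin_two_self]) hxy]
  gcongr
  calc ∑ s, ∑ t, |a ![f s, f t]| ≤ ∑ _s : ι, comass a := Finset.sum_le_sum fun s _ => by
        obtain ⟨j, hj⟩ := hfa s
        rw [Finset.sum_eq_single j (fun k _ hk => by simp [hj k hk]) (by simp)]
        exact le_comass a fun i => by fin_cases i <;> simp [hf]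
    _ = Fintype.card ι * comass a := by simp

lemma abs_wedge_apply_le_of_isPaired (B : F [⋀^Fin p]→ₗ[ℝ] ℝ) (a : F [⋀^Fin 2]→ₗ[ℝ] ℝ)
    {f : Fin (p + 2) → F} (hf : ∀ i, ‖f i‖ ≤ 1) (hfa : IsPaired a f) :
    |wedge B a f| ≤ (p + 2) / 2 * comass B * comass a := by
  set x := Fin.natAdd p (0 : Fin 2)
  set y := Fin.natAdd p (1 : Fin 2)
  have hterm (σ : Perm (Fin (p + 2))) :
      |(Perm.sign σ : ℝ) * (B (fun i => f (σ (Fin.castAdd 2 i))) *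
        a (fun j => f (σ (Fin.natAdd p j))))| ≤ comass B * |a ![f (σ x), f (σ y)]| := by
    have ha : (fun j => f (σ (Fin.natAdd p j))) = ![f (σ x), f (σ y)] := by
      funext j
      fin_cases j <;> rfl
    have hsign : |(Perm.sign σ : ℝ)| = 1 := by
      rcases Int.units_eq_one_or (Perm.sign σ) with h | h <;> simp [h]
    rw [abs_mul, abs_mul, ha, hsign, one_mul]
    exact mul_le_mul_of_nonneg_right (le_comass B fun i => hf _) (abs_nonneg _)
  have hsum : (p.factorial * 2 : ℝ) * |wedge B a f| ≤
      p.factorial * ((p + 2) * comass B * comass a) :=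
    calc (p.factorial * 2 : ℝ) * |wedge B a f|
        = |(p.factorial * (2 : ℕ).factorial : ℝ) * wedge B a f| := by
          rw [abs_mul, abs_of_nonneg (by positivity : (0 : ℝ) ≤ p.factorial * (2 : ℕ).factorial)]
          simp
      _ ≤ comass B * ∑ σ : Perm (Fin (p + 2)), |a ![f (σ x), f (σ y)]| := by
          rw [factorial_mul_wedge_apply, Finset.mul_sum]
          exact (Finset.abs_sum_le_sum_abs _ _).trans (Finset.sum_le_sum fun σ _ => hterm σ)
      _ ≤ comass B * (p.factorial * ((p + 2 : ℕ) * comass a)) := by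
          gcongr
          · exact comass_nonneg B
          · simpa using sum_perm_abs_apply_le_of_isPaired a hf hfa (x := x) (y := y)
              (by simp [x, y, Fin.ext_iff])
      _ = p.factorial * ((p + 2) * comass B * comass a) := by
          push_cast
          ring
  have hpos : (0 : ℝ) < p.factorial := by positivity
  rw [div_mul_eq_mul_div, div_mul_eq_mul_div, le_div_iff₀ two_pos]
  nlinarith

theorem comass_wedge_le (B : F [⋀^Fin p]→ₗ[ℝ] ℝ) (a : F [⋀^Fin 2]→ₗ[ℝ] ℝ) :
    comass (wedge B a) ≤ (p + 2) / 2 * comass B * comass a := by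
  refine comass_le _ fun v hv => ?_
  by_cases hv' : LinearIndependent ℝ v
  swap
  · rw [AlternatingMap.map_linearDependent _ _ hv', abs_zero]
    have := comass_nonneg B
    have := comass_nonneg a
    positivity
  set W := span ℝ (range v)
  have hW : finrank ℝ W = p + 2 := by rw [finrank_span_eq_card hv']; simp
  obtain ⟨f, hf, hfa⟩ := exists_orthonormal_isPaired (a.compLinearMap W.subtype) hW
  let v' : Fin (p + 2) → W := fun i => ⟨v i, subset_span (mem_range_self i)⟩
  calc |wedge B a v|
      = |wedge (B.compLinearMap W.subtype) (a.compLinearMap W.subtype) v'| := by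
        rw [wedge_compLinearMap_apply]; rfl
    _ ≤ |wedge (B.compLinearMap W.subtype) (a.compLinearMap W.subtype) f| * ∏ i, ‖v' i‖ :=
      abs_apply_le_of_orthonormal hW _ hf v'
    _ ≤ |wedge (B.compLinearMap W.subtype) (a.compLinearMap W.subtype) f| :=
      mul_le_of_le_one_right (abs_nonneg _)
        (Finset.prod_le_one (fun _ _ => norm_nonneg _) fun i _ => hv i)
    _ ≤ (p + 2) / 2 * comass (B.compLinearMap W.subtype) * comass (a.compLinearMap W.subtype) :=
      abs_wedge_apply_le_of_isPaired _ _ (fun i => (hf.1 i).le) hfa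
    _ ≤ (p + 2) / 2 * comass B * comass a :=
      mul_le_mul
        (mul_le_mul_of_nonneg_left (comass_compLinearMap_le B W.subtypeₗᵢ) (by positivity))
        (comass_compLinearMap_le a W.subtypeₗᵢ) (comass_nonneg _)
        (mul_nonneg (by positivity) (comass_nonneg B))

end WedgeBound

/-- For any n 2-forms ω₁,…,ω_n on ℝ^m,
comass(ω₁ ∧ ⋯ ∧ ω_n) ≤ n! · comass(ω₁) ⋯ comass(ω_n). -/
theorem comass_wedge_many (m n : ℕ)
    (ω : Fin n → ((EuclideanSpace ℝ (Fin m)) [⋀^Fin 2]→ₗ[ℝ] ℝ)) :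
    comass (wedgeMany n ω) ≤ (n.factorial : ℝ) * ∏ i : Fin n, comass (ω i) := by
  induction n with
  | zero => simpa using comass_le (wedgeMany 0 ω) (C := 1) fun v _ => by simp [wedgeMany]
  | succ n ih =>
    calc comass (wedgeMany (n + 1) ω)
        ≤ ((2 * n : ℕ) + 2) / 2 * comass (wedgeMany n fun i => ω i.castSucc) *
            comass (ω (Fin.last n)) := comass_wedge_le _ _
      _ ≤ (n + 1) * ((n.factorial : ℝ) * ∏ i : Fin n, comass (ω i.castSucc)) *
            comass (ω (Fin.last n)) := by
        rw [show (((2 * n : ℕ) : ℝ) + 2) / 2 = n + 1 by push_cast; ring]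
        gcongr
        · exact comass_nonneg _
        · exact ih _
      _ = ((n + 1).factorial : ℝ) * ∏ i : Fin (n + 1), comass (ω i) := by
        rw [Fin.prod_univ_castSucc, Nat.factorial_succ]
        push_cast
        ring
end

section
/- For every lattice L in the Euclidean plane ℝ², λ₁(L) · λ₂(L*) ≤ 2/√3, where L* is the dual lattice. -/
/-- k-th successive minimum of a lattice w.r.t. a norm function N. -/
noncomputable def succMin {B : Type*} [AddCommGroup B] [Module ℝ B]
    (N : B → ℝ) (L : Submodule ℤ B) (k : ℕ) : ℝ :=
  sInf {r | ∃ v : Fin k → B, (∀ i, v i ∈ L) ∧ LinearIndependent ℝ v ∧ ∀ i, N (v i) ≤ r}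

/-- The dual lattice inside the dual space. -/
def dualLattice {B : Type*} [AddCommGroup B] [Module ℝ B] (L : Submodule ℤ B) :
    Submodule ℤ (Module.Dual ℝ B) where
  carrier := {f | ∀ x ∈ L, ∃ m : ℤ, f x = (m : ℝ)}
  add_mem' := by
    intro f g hf hg x hx
    obtain ⟨m, hm⟩ := hf x hx
    obtain ⟨k, hk⟩ := hg x hx
    exact ⟨m + k, by simp [hm, hk]⟩
  zero_mem' := fun x _ => ⟨0, by simp⟩
  smul_mem' := by
    intro c f hf x hx
    obtain ⟨m, hm⟩ := hf x hx
    refine ⟨c * m, ?_⟩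
    have : (c • f) x = (c : ℝ) * f x := by simp
    rw [this, hm]; push_cast; ring

/-- The dual norm of a norm function N. -/
noncomputable def dualNorm {B : Type*} [AddCommGroup B] [Module ℝ B]
    (N : B → ℝ) (f : Module.Dual ℝ B) : ℝ :=
  sSup {r | ∃ x : B, N x ≤ 1 ∧ r = |f x|}

/-- The dual lattice inside a real inner product space. -/
def dualLatticeE {E : Type*} [NormedAddCommGroup E] [InnerProductSpace ℝ E]
    (L : Submodule ℤ E) : Submodule ℤ E where
  carrier := {y | ∀ x ∈ L, ∃ m : ℤ, (inner ℝ x y : ℝ) = (m : ℝ)}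
  add_mem' := by
    intro f g hf hg x hx
    obtain ⟨m, hm⟩ := hf x hx
    obtain ⟨k, hk⟩ := hg x hx
    exact ⟨m + k, by rw [inner_add_right, hm, hk]; push_cast; ring⟩
  zero_mem' := fun x _ => ⟨0, by simp⟩
  smul_mem' := by
    intro c y hy x hx
    obtain ⟨m, hm⟩ := hy x hx
    refine ⟨c * m, ?_⟩
    rw [← Int.cast_smul_eq_zsmul ℝ, inner_smul_right, hm]
    push_cast; ring

/-!
Let `u` be a shortest nonzero vector of `L` and `v` a shortest vector of `L` off the line `ℝ u`.
Comparing `v` with `v ± u` gives `2 |⟪u, v⟫| ≤ ‖u‖²`, and `‖u‖ ≤ ‖v‖`. Hence every vector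
`a u + b v` with `|a|, |b| ≤ 1/2` is shorter than `v`; reducing a lattice vector modulo `ℤ u + ℤ v`
and using the minimality of `v` and then of `u` shows that `u, v` is a `ℤ`-basis of `L`.
The dual basis of `L*` has norms `‖v‖ / √G` and `‖u‖ / √G`, where the Gram determinant
`G = ‖u‖²‖v‖² - ⟪u, v⟫²` is at least `(3/4) ‖u‖²‖v‖²`, so `λ₁(L) λ₂(L*) ≤ ‖u‖‖v‖ / √G ≤ 2 / √3`.
-/

open Module Submodule
open scoped RealInnerProductSpace

theorem Submodule.exists_norm_le_of_subset {E : Type*} [NormedAddCommGroup E] [ProperSpace E]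
    (L : Submodule ℤ E) [DiscreteTopology L] {S : Set E} (hSL : S ⊆ L) (hS : S.Nonempty) :
    ∃ x ∈ S, ∀ y ∈ S, ‖x‖ ≤ ‖y‖ := by
  obtain ⟨w, hw⟩ := hS
  have hclosed : IsClosed (L : Set E) := AddSubgroup.isClosed_of_discrete (H := L.toAddSubgroup)
  have hfin : (S ∩ Metric.closedBall 0 ‖w‖).Finite :=
    (Metric.finite_isBounded_inter_isClosed DiscreteTopology.isDiscrete
      Metric.isBounded_closedBall hclosed).subset fun x hx => ⟨hx.2, hSL hx.1⟩
  obtain ⟨x, ⟨hxS, hxw⟩, hmin⟩ := Set.exists_min_image _ (‖·‖) hfin ⟨w, hw, by simp⟩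
  refine ⟨x, hxS, fun y hy => ?_⟩
  rcases le_total ‖y‖ ‖w‖ with hyw | hwy
  · exact hmin y ⟨hy, by simpa using hyw⟩
  · exact (mem_closedBall_zero_iff.1 hxw).trans hwy

section succMin

variable {B : Type*} [AddCommGroup B] [Module ℝ B] {N : B → ℝ} {L : Submodule ℤ B} {k : ℕ}

theorem succMin_le (hN : ∀ x, 0 ≤ N x) (hk : k ≠ 0) {v : Fin k → B} (hvL : ∀ i, v i ∈ L)
    (hv : LinearIndependent ℝ v) {r : ℝ} (hr : ∀ i, N (v i) ≤ r) : succMin N L k ≤ r :=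
  csInf_le ⟨0, fun _ ⟨_, _, _, hs⟩ => (hN _).trans (hs ⟨0, Nat.pos_of_ne_zero hk⟩)⟩ ⟨v, hvL, hv, hr⟩

theorem succMin_nonneg (hN : ∀ x, 0 ≤ N x) (hk : k ≠ 0) : 0 ≤ succMin N L k :=
  Real.sInf_nonneg fun _ ⟨_, _, _, hs⟩ => (hN _).trans (hs ⟨0, Nat.pos_of_ne_zero hk⟩)

end succMin

variable {E : Type*} [NormedAddCommGroup E] [InnerProductSpace ℝ E]

/-- `u` and `v` realise the first two successive minima of `L`. -/
structure IsMinimalPair (L : Submodule ℤ E) (u v : E) : Prop where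
  left_mem : u ∈ L
  right_mem : v ∈ L
  left_ne_zero : u ≠ 0
  right_notMem_span : v ∉ ℝ ∙ u
  norm_left_le : ∀ w ∈ L, w ≠ 0 → ‖u‖ ≤ ‖w‖
  norm_right_le : ∀ w ∈ L, w ∉ ℝ ∙ u → ‖v‖ ≤ ‖w‖

theorem exists_isMinimalPair [FiniteDimensional ℝ E] (L : Submodule ℤ E) [DiscreteTopology L]
    [IsZLattice ℝ L] (hE : 2 ≤ finrank ℝ E) : ∃ u v, IsMinimalPair L u v := by
  have hL (K : Submodule ℝ E) (hK : K ≠ ⊤) : ∃ w ∈ L, w ∉ K := by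
    by_contra! hLK
    exact hK (eq_top_iff.2 (IsZLattice.span_top (K := ℝ) (L := L) ▸ span_le.2 hLK))
  have : Nontrivial E := nontrivial_of_finrank_pos (R := ℝ) (by omega)
  obtain ⟨u, ⟨huL, hu⟩, humin⟩ := L.exists_norm_le_of_subset (S := {w | w ∈ L ∧ w ≠ 0})
    (fun w hw => hw.1) <| by
      obtain ⟨w, hwL, hw⟩ := hL ⊥ bot_ne_top
      exact ⟨w, hwL, by simpa using hw⟩
  have hline : (ℝ ∙ u) ≠ ⊤ := fun htop => by
    have := finrank_span_singleton (K := ℝ) hu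
    rw [htop, finrank_top] at this
    omega
  obtain ⟨v, ⟨hvL, hv⟩, hvmin⟩ := L.exists_norm_le_of_subset (S := {w | w ∈ L ∧ w ∉ ℝ ∙ u})
    (fun w hw => hw.1) (hL _ hline)
  exact ⟨u, v, huL, hvL, hu, hv, fun w hwL hw => humin w ⟨hwL, hw⟩,
    fun w hwL hw => hvmin w ⟨hwL, hw⟩⟩

def gramDet (u v : E) : ℝ := ‖u‖ ^ 2 * ‖v‖ ^ 2 - ⟪u, v⟫ ^ 2

theorem gramDet_comm (u v : E) : gramDet u v = gramDet v u := by
  rw [gramDet, gramDet, real_inner_comm, mul_comm]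

/-- The vector of `span ℝ {u, v}` pairing to `1` with `u` and to `0` with `v`. -/
noncomputable def dualVec (u v : E) : E := (gramDet u v)⁻¹ • (‖v‖ ^ 2 • u - ⟪u, v⟫ • v)

theorem inner_left_dualVec {u v : E} (hG : gramDet u v ≠ 0) : ⟪u, dualVec u v⟫ = 1 := by
  rw [dualVec, inner_smul_right, inner_sub_right, inner_smul_right, inner_smul_right,
    real_inner_self_eq_norm_sq, ← mul_comm (‖u‖ ^ 2), ← sq, ← gramDet, inv_mul_cancel₀ hG]

theorem inner_right_dualVec (u v : E) : ⟪v, dualVec u v⟫ = 0 := by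
  rw [dualVec, inner_smul_right, inner_sub_right, inner_smul_right, inner_smul_right,
    real_inner_self_eq_norm_sq, real_inner_comm]
  ring

theorem norm_dualVec_sq (u v : E) : ‖dualVec u v‖ ^ 2 = ‖v‖ ^ 2 / gramDet u v := by
  have hcomb : ‖‖v‖ ^ 2 • u - ⟪u, v⟫ • v‖ ^ 2 = ‖v‖ ^ 2 * gramDet u v := by
    rw [norm_sub_sq_real, norm_smul, norm_smul, inner_smul_left, inner_smul_right,
      Real.norm_eq_abs, Real.norm_eq_abs, gramDet]
    simp only [conj_trivial, abs_pow, abs_norm, mul_pow, sq_abs]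
    ring
  rw [dualVec, norm_smul, mul_pow, hcomb, norm_inv, Real.norm_eq_abs, inv_pow, sq_abs]
  field_simp

theorem linearIndependent_dualVec {u v : E} (hG : gramDet u v ≠ 0) :
    LinearIndependent ℝ ![dualVec u v, dualVec v u] := by
  have hG' : gramDet v u ≠ 0 := gramDet_comm u v ▸ hG
  refine LinearIndependent.pair_iff.2 fun s t hst => ⟨?_, ?_⟩
  · simpa [inner_add_right, inner_smul_right, inner_left_dualVec hG, inner_right_dualVec]
      using congr_arg (⟪u, ·⟫) hst
  · simpa [inner_add_right, inner_smul_right, inner_left_dualVec hG', inner_right_dualVec]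
      using congr_arg (⟪v, ·⟫) hst

namespace IsMinimalPair

variable {L : Submodule ℤ E} {u v : E}

theorem right_ne_zero (h : IsMinimalPair L u v) : v ≠ 0 :=
  fun hv => h.right_notMem_span (hv ▸ zero_mem _)

theorem norm_left_le_norm_right (h : IsMinimalPair L u v) : ‖u‖ ≤ ‖v‖ :=
  h.norm_left_le v h.right_mem h.right_ne_zero

theorem linearIndependent (h : IsMinimalPair L u v) : LinearIndependent ℝ ![u, v] :=
  (LinearIndependent.pair_iff' h.left_ne_zero).2 fun _ hav =>
    h.right_notMem_span (hav ▸ smul_mem _ _ (mem_span_singleton_self u))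

theorem span_eq_top (h : IsMinimalPair L u v) (hE : finrank ℝ E = 2) : span ℝ {u, v} = ⊤ := by
  have : FiniteDimensional ℝ E := .of_finrank_pos (by omega)
  have := h.linearIndependent.span_eq_top_of_card_eq_finrank' (by simp [hE])
  rwa [Matrix.range_cons_cons_empty] at this

theorem two_mul_abs_inner_le (h : IsMinimalPair L u v) : 2 * |⟪u, v⟫| ≤ ‖u‖ ^ 2 := by
  have hshift (w : E) (hw : w ∈ ℝ ∙ u) (hwL : w ∈ L) : ‖v‖ ^ 2 ≤ ‖v + w‖ ^ 2 := by
    have hvw : v + w ∉ ℝ ∙ u := fun hvw => h.right_notMem_span (by simpa using sub_mem hvw hw)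
    gcongr
    exact h.norm_right_le _ (add_mem h.right_mem hwL) hvw
  have hplus := hshift u (mem_span_singleton_self u) h.left_mem
  have hminus := hshift (-u) (neg_mem (mem_span_singleton_self u)) (neg_mem h.left_mem)
  rw [norm_add_sq_real, real_inner_comm] at hplus hminus
  rw [inner_neg_left, norm_neg] at hminus
  cases abs_cases ⟪u, v⟫ <;> linarith

theorem norm_smul_add_smul_lt (h : IsMinimalPair L u v) {a b : ℝ} (ha : |a| ≤ 1 / 2)
    (hb : |b| ≤ 1 / 2) : ‖a • u + b • v‖ < ‖v‖ := by
  have hexpand :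
      ‖a • u + b • v‖ ^ 2 = a ^ 2 * ‖u‖ ^ 2 + 2 * (a * b * ⟪u, v⟫) + b ^ 2 * ‖v‖ ^ 2 := by
    rw [norm_add_sq_real, norm_smul, norm_smul, inner_smul_left, inner_smul_right,
      Real.norm_eq_abs, Real.norm_eq_abs, mul_pow, mul_pow, sq_abs, sq_abs, conj_trivial, mul_assoc]
  have ha2 : a ^ 2 ≤ 1 / 4 := by nlinarith [abs_nonneg a, sq_abs a]
  have hb2 : b ^ 2 ≤ 1 / 4 := by nlinarith [abs_nonneg b, sq_abs b]
  have hcross : 2 * (a * b * ⟪u, v⟫) ≤ ‖u‖ ^ 2 / 4 := calc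
    2 * (a * b * ⟪u, v⟫) ≤ 2 * (|a| * |b| * |⟪u, v⟫|) := by
      rw [← abs_mul, ← abs_mul]; gcongr; exact le_abs_self _
    _ ≤ 2 * (1 / 2 * (1 / 2) * |⟪u, v⟫|) := by gcongr
    _ ≤ ‖u‖ ^ 2 / 4 := by linarith [h.two_mul_abs_inner_le]
  have huv : ‖u‖ ^ 2 ≤ ‖v‖ ^ 2 := by gcongr; exact h.norm_left_le_norm_right
  have hv : 0 < ‖v‖ ^ 2 := by have := norm_pos_iff.2 h.right_ne_zero; positivity
  refine lt_of_pow_lt_pow_left₀ 2 (norm_nonneg v) ?_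
  rw [hexpand]
  nlinarith [mul_le_mul_of_nonneg_right ha2 (sq_nonneg ‖u‖),
    mul_le_mul_of_nonneg_right hb2 (sq_nonneg ‖v‖)]

theorem exists_intCast_of_smul_add_smul_mem (h : IsMinimalPair L u v) {a b : ℝ}
    (hab : a • u + b • v ∈ L) : (∃ m : ℤ, a = m) ∧ ∃ n : ℤ, b = n := by
  set a' := a - round a
  set b' := b - round b
  have hmem : a' • u + b' • v ∈ L := by
    have : a' • u + b' • v = a • u + b • v - (round a • u + round b • v) := by
      simp only [a', b', sub_smul, Int.cast_smul_eq_zsmul]; abel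
    rw [this]
    exact sub_mem hab (add_mem (zsmul_mem h.left_mem _) (zsmul_mem h.right_mem _))
  have hb' : b' = 0 := by
    by_contra hb'
    refine (h.norm_smul_add_smul_lt (abs_sub_round a) (abs_sub_round b)).not_ge
      (h.norm_right_le _ hmem fun hspan => h.right_notMem_span ?_)
    have : v = b'⁻¹ • ((a' • u + b' • v) - a' • u) := by
      rw [add_sub_cancel_left, smul_smul, inv_mul_cancel₀ hb', one_smul]
    rw [this]
    exact smul_mem _ _ (sub_mem hspan (smul_mem _ _ (mem_span_singleton_self u)))
  have ha' : a' = 0 := by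
    by_contra ha'
    rw [hb', zero_smul, add_zero] at hmem
    have hle := h.norm_left_le _ hmem (smul_ne_zero ha' h.left_ne_zero)
    rw [norm_smul, Real.norm_eq_abs] at hle
    nlinarith [abs_sub_round a, norm_pos_iff.2 h.left_ne_zero]
  exact ⟨⟨round a, by linarith [sub_eq_zero.1 ha']⟩, ⟨round b, by linarith [sub_eq_zero.1 hb']⟩⟩

theorem three_mul_sq_le_four_mul_gramDet (h : IsMinimalPair L u v) :
    3 * (‖u‖ * ‖v‖) ^ 2 ≤ 4 * gramDet u v := by
  have hinner : 4 * ⟪u, v⟫ ^ 2 ≤ ‖u‖ ^ 2 * ‖u‖ ^ 2 := by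
    rw [← sq_abs]; nlinarith [h.two_mul_abs_inner_le, abs_nonneg ⟪u, v⟫]
  have hnorm : ‖u‖ ^ 2 ≤ ‖v‖ ^ 2 := by gcongr; exact h.norm_left_le_norm_right
  rw [gramDet]
  nlinarith [sq_nonneg ‖u‖]

theorem gramDet_pos (h : IsMinimalPair L u v) : 0 < gramDet u v := by
  have := h.three_mul_sq_le_four_mul_gramDet
  have : 0 < (‖u‖ * ‖v‖) ^ 2 := by
    have := norm_pos_iff.2 h.left_ne_zero
    have := norm_pos_iff.2 h.right_ne_zero
    positivity
  linarith

theorem dualVec_mem_dualLatticeE (h : IsMinimalPair L u v) (hspan : span ℝ {u, v} = ⊤) :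
    dualVec u v ∈ dualLatticeE L ∧ dualVec v u ∈ dualLatticeE L := by
  have hG : gramDet u v ≠ 0 := h.gramDet_pos.ne'
  have hG' : gramDet v u ≠ 0 := gramDet_comm u v ▸ hG
  have hcoord (x : E) (hx : x ∈ L) : ∃ m n : ℤ, x = (m : ℝ) • u + (n : ℝ) • v := by
    obtain ⟨a, b, rfl⟩ := mem_span_pair.1 (hspan ▸ mem_top : x ∈ span ℝ {u, v})
    obtain ⟨⟨m, rfl⟩, ⟨n, rfl⟩⟩ := h.exists_intCast_of_smul_add_smul_mem hx
    exact ⟨m, n, rfl⟩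
  constructor
  · intro x hx
    obtain ⟨m, n, rfl⟩ := hcoord x hx
    exact ⟨m, by
      simp [inner_add_left, inner_smul_left, inner_left_dualVec hG, inner_right_dualVec]⟩
  · intro x hx
    obtain ⟨m, n, rfl⟩ := hcoord x hx
    exact ⟨n, by
      simp [inner_add_left, inner_smul_left, inner_left_dualVec hG', inner_right_dualVec]⟩

theorem norm_dualVec_swap_le (h : IsMinimalPair L u v) : ‖dualVec v u‖ ≤ ‖dualVec u v‖ := by
  rw [← pow_le_pow_iff_left₀ (norm_nonneg _) (norm_nonneg _) two_ne_zero, norm_dualVec_sq,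
    norm_dualVec_sq, gramDet_comm v u]
  have := h.gramDet_pos
  gcongr
  exact h.norm_left_le_norm_right

theorem norm_mul_norm_dualVec_le (h : IsMinimalPair L u v) :
    ‖u‖ * ‖dualVec u v‖ ≤ 2 / √3 := by
  rw [← pow_le_pow_iff_left₀ (by positivity) (by positivity) two_ne_zero, mul_pow,
    norm_dualVec_sq, div_pow, Real.sq_sqrt zero_le_three, ← mul_div_assoc, ← mul_pow,
    div_le_div_iff₀ h.gramDet_pos zero_lt_three]
  linarith [h.three_mul_sq_le_four_mul_gramDet]

end IsMinimalPair

/-- For every lattice L in the Euclidean plane, λ₁(L)·λ₂(L*) ≤ 2/√3. -/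
theorem euclidean_plane_bound (L : Submodule ℤ (EuclideanSpace ℝ (Fin 2)))
    [DiscreteTopology L] [IsZLattice ℝ L] :
    succMin (fun x => ‖x‖) L 1 * succMin (fun x => ‖x‖) (dualLatticeE L) 2 ≤
      2 / Real.sqrt 3 := by
  have hrank : finrank ℝ (EuclideanSpace ℝ (Fin 2)) = 2 := finrank_euclideanSpace_fin
  obtain ⟨u, v, h⟩ := exists_isMinimalPair L hrank.ge
  obtain ⟨hdual₁, hdual₂⟩ := h.dualVec_mem_dualLatticeE (h.span_eq_top hrank)
  have hfirst : succMin (fun x => ‖x‖) L 1 ≤ ‖u‖ :=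
    succMin_le (fun _ => norm_nonneg _) one_ne_zero (v := fun _ => u) (fun _ => h.left_mem)
      (linearIndependent_unique_iff.2 h.left_ne_zero) fun _ => le_rfl
  have hsecond : succMin (fun x => ‖x‖) (dualLatticeE L) 2 ≤ ‖dualVec u v‖ :=
    succMin_le (fun _ => norm_nonneg _) two_ne_zero (Fin.forall_fin_two.2 ⟨hdual₁, hdual₂⟩)
      (linearIndependent_dualVec h.gramDet_pos.ne')
      (Fin.forall_fin_two.2 ⟨le_rfl, h.norm_dualVec_swap_le⟩)
  calc _ ≤ ‖u‖ * ‖dualVec u v‖ := mul_le_mul hfirst hsecond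
        (succMin_nonneg (fun _ => norm_nonneg _) two_ne_zero) (norm_nonneg _)
    _ ≤ 2 / √3 := h.norm_mul_norm_dualVec_le
end

section
/- For every lattice L in ℝ² with the standard Euclidean norm, λ₁(L) · λ₁(L*) ≤ √2, where L* is the dual lattice. -/
/-! Minkowski's convex body theorem, applied to a disc of area `π √2 covol(L) > 4 covol(L)`, gives a
nonzero `v ∈ L` with `‖v‖² < √2 covol(L)`. If `b₀, b₁` is a basis of `L` and `ω` the area form,
then for `x ∈ L` the number `⟪x, J v⟫ = ω v x` is an integer multiple of `ω b₀ b₁ = ± covol(L)`,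
so rotating `v` by a right angle and dividing by `ω b₀ b₁` gives a nonzero dual vector of norm
`‖v‖ / covol(L)`. Hence `λ₁(L) λ₁(L*) ≤ ‖v‖² / covol(L) < √2`. -/

open MeasureTheory Module Metric ZSpan

section SuccMin

variable {B : Type*} [NormedAddCommGroup B] [Module ℝ B] (L : Submodule ℤ B)

theorem succMin_one_nonneg : 0 ≤ succMin (fun x => ‖x‖) L 1 :=
  Real.sInf_nonneg fun _ ⟨v, _, _, hv⟩ => (norm_nonneg (v 0)).trans (hv 0)

theorem succMin_one_le_norm {u : B} (hu : u ∈ L) (hu0 : u ≠ 0) :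
    succMin (fun x => ‖x‖) L 1 ≤ ‖u‖ :=
  csInf_le ⟨0, fun _ ⟨v, _, _, hv⟩ => (norm_nonneg (v 0)).trans (hv 0)⟩
    ⟨fun _ => u, fun _ => hu, linearIndependent_unique_iff.mpr hu0, fun _ => le_rfl⟩

end SuccMin

namespace ZLattice

section NormedSpace

variable {E : Type*} [NormedAddCommGroup E] [NormedSpace ℝ E] [FiniteDimensional ℝ E]
  (L : Submodule ℤ E) [DiscreteTopology L] [IsZLattice ℝ L]

theorem exists_ne_zero_mem_ball_of_covolume [MeasurableSpace E] [BorelSpace E]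
    (μ : Measure E) [μ.IsAddHaarMeasure] {r : ℝ}
    (h : ENNReal.ofReal (covolume L μ) * 2 ^ finrank ℝ E < μ (ball 0 r)) :
    ∃ v ∈ L, v ≠ 0 ∧ ‖v‖ < r := by
  have fund := isAddFundamentalDomain (Free.chooseBasis ℤ L) μ
  rw [covolume_eq_measure_fundamentalDomain L μ fund,
    ofReal_measureReal (fundamentalDomain_isBounded _).measure_lt_top.ne] at h
  have : Countable L.toAddSubgroup := inferInstanceAs (Countable L)
  obtain ⟨v, hv0, hv⟩ := exists_ne_zero_mem_lattice_of_measure_mul_two_pow_lt_measure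
    (L := L.toAddSubgroup) fund (fun x hx => by simpa using hx) (convex_ball 0 r) h
  exact ⟨v, v.2, by simpa using hv0, mem_ball_zero_iff.mp hv⟩

theorem exists_intCast_mul_of_alternatingMap
    {ι : Type*} [Fintype ι] [DecidableEq ι] (b : Basis ι ℤ L) (f : E [⋀^ι]→ₗ[ℝ] ℝ)
    {v : ι → E} (hv : ∀ i, v i ∈ L) : ∃ m : ℤ, f v = m * f ((↑) ∘ b) := by
  let B := b.ofZLatticeBasis ℝ L
  have hB : B.toMatrix v = (b.toMatrix fun i => (⟨v i, hv i⟩ : L)).map (Int.cast : ℤ → ℝ) := by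
    ext i j
    exact b.ofZLatticeBasis_repr_apply ℝ L ⟨v j, hv j⟩ i
  have hb : ((↑) ∘ b : ι → E) = B := funext fun i => (b.ofZLatticeBasis_apply ℝ L i).symm
  refine ⟨(b.toMatrix fun i => (⟨v i, hv i⟩ : L)).det, ?_⟩
  conv_lhs => rw [f.eq_smul_basis_det B]
  rw [AlternatingMap.smul_apply, Basis.det_apply, hB, Int.cast_det, hb, smul_eq_mul, mul_comm]

end NormedSpace

theorem covolume_eq_abs_det_orthonormalBasis {E : Type*} [NormedAddCommGroup E]
    [InnerProductSpace ℝ E] [FiniteDimensional ℝ E] [MeasurableSpace E] [BorelSpace E]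
    (L : Submodule ℤ E) [DiscreteTopology L] [IsZLattice ℝ L]
    {ι : Type*} [Fintype ι] [DecidableEq ι] (b : Basis ι ℤ L) (e : OrthonormalBasis ι ℝ E) :
    covolume L = |e.toBasis.det ((↑) ∘ b)| := by
  rw [covolume_eq_det_mul_measureReal L volume b e.toBasis,
    measureReal_congr (fundamentalDomain_ae_parallelepiped _ _), OrthonormalBasis.coe_toBasis,
    measureReal_def, e.volume_parallelepiped, ENNReal.toReal_one, mul_one]

end ZLattice

section Plane

variable {E : Type*} [NormedAddCommGroup E] [InnerProductSpace ℝ E] [Fact (finrank ℝ E = 2)]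
  (L : Submodule ℤ E) [DiscreteTopology L] [IsZLattice ℝ L]

attribute [local instance] FiniteDimensional.of_fact_finrank_eq_two

theorem ZLattice.covolume_eq_abs_areaForm [MeasurableSpace E] [BorelSpace E]
    (o : Orientation ℝ E (Fin 2)) (b : Basis (Fin 2) ℤ L) :
    ZLattice.covolume L = |o.areaForm (b 0) (b 1)| := by
  let e := (stdOrthonormalBasis ℝ E).reindex (finCongr (Fact.out : finrank ℝ E = 2))
  have hb : ![(b 0 : E), b 1] = (↑) ∘ b := by ext i; fin_cases i <;> rfl
  rw [o.areaForm_to_volumeForm, o.volumeForm_robust' e, hb,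
    ZLattice.covolume_eq_abs_det_orthonormalBasis L b e]

theorem exists_mem_dualLatticeE_norm_eq [MeasurableSpace E] [BorelSpace E] {v : E} (hv : v ∈ L) :
    ∃ w ∈ dualLatticeE L, ‖w‖ = ‖v‖ / ZLattice.covolume L := by
  let o : Orientation ℝ E (Fin 2) := (finBasisOfFinrankEq ℝ E Fact.out).orientation
  let b : Basis (Fin 2) ℤ L := finBasisOfFinrankEq ℤ L (by rw [ZLattice.rank ℝ L]; exact Fact.out)
  set D := o.areaForm (b 0) (b 1)
  have hD : |D| = ZLattice.covolume L := (ZLattice.covolume_eq_abs_areaForm L o b).symm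
  have hD0 : D ≠ 0 := abs_pos.mp (hD ▸ ZLattice.covolume_pos L)
  refine ⟨D⁻¹ • o.rightAngleRotation v, fun x hx => ?_, ?_⟩
  · obtain ⟨m, hm⟩ := ZLattice.exists_intCast_mul_of_alternatingMap L b o.volumeForm
      (v := ![v, x]) (Fin.forall_fin_two.mpr ⟨hv, hx⟩)
    have hb : ((↑) ∘ b : Fin 2 → E) = ![(b 0 : E), b 1] := by ext i; fin_cases i <;> rfl
    rw [hb, ← o.areaForm_to_volumeForm, ← o.areaForm_to_volumeForm] at hm
    refine ⟨m, ?_⟩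
    rw [inner_smul_right, o.inner_rightAngleRotation_right, o.areaForm_swap, neg_neg, hm, mul_comm,
      mul_inv_cancel_right₀ hD0]
  · rw [norm_smul, LinearIsometryEquiv.norm_map, norm_inv, Real.norm_eq_abs, hD, inv_mul_eq_div]

theorem exists_ne_zero_mem_norm_sq_lt_sqrt_two_mul_covolume [MeasurableSpace E] [BorelSpace E] :
    ∃ v ∈ L, v ≠ 0 ∧ ‖v‖ ^ 2 < √2 * ZLattice.covolume L := by
  have hE : finrank ℝ E = 2 := Fact.out
  have : Nontrivial E := Module.nontrivial_of_finrank_eq_succ hE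
  set c := ZLattice.covolume L
  have hc := ZLattice.covolume_pos L
  set r := √(√2 * c)
  have hr : r ^ 2 = √2 * c := Real.sq_sqrt (by positivity)
  have hvol : ENNReal.ofReal c * 2 ^ finrank ℝ E < volume (ball (0 : E) r) := by
    rw [InnerProductSpace.volume_ball_of_dim_even (k := 1) hE, hE,
      ← ENNReal.ofReal_pow (Real.sqrt_nonneg _), hr]
    have hsqrt2 : (1.414 : ℝ) ≤ √2 := Real.le_sqrt_of_sq_le (by norm_num)
    rw [← ENNReal.ofReal_ofNat 2, ← ENNReal.ofReal_pow zero_le_two, ← ENNReal.ofReal_mul hc.le,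
      ← ENNReal.ofReal_mul (by positivity), ENNReal.ofReal_lt_ofReal_iff (by positivity),
      pow_one, Nat.factorial_one, Nat.cast_one, div_one]
    nlinarith [Real.pi_gt_d2]
  obtain ⟨v, hvL, hv0, hv⟩ := ZLattice.exists_ne_zero_mem_ball_of_covolume L volume hvol
  exact ⟨v, hvL, hv0, hr ▸ pow_lt_pow_left₀ hv (norm_nonneg v) two_ne_zero⟩

theorem succMin_one_mul_succMin_one_dualLatticeE_le_sqrt_two :
    succMin (fun x => ‖x‖) L 1 * succMin (fun x => ‖x‖) (dualLatticeE L) 1 ≤ √2 := by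
  borelize E
  obtain ⟨v, hvL, hv0, hv⟩ := exists_ne_zero_mem_norm_sq_lt_sqrt_two_mul_covolume L
  obtain ⟨w, hwL, hw⟩ := exists_mem_dualLatticeE_norm_eq L hvL
  have hc := ZLattice.covolume_pos L
  have hw0 : w ≠ 0 := norm_pos_iff.mp (hw ▸ by positivity)
  calc succMin (fun x => ‖x‖) L 1 * succMin (fun x => ‖x‖) (dualLatticeE L) 1
      ≤ ‖v‖ * ‖w‖ := mul_le_mul (succMin_one_le_norm L hvL hv0)
        (succMin_one_le_norm _ hwL hw0) (succMin_one_nonneg _) (norm_nonneg v)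
    _ = ‖v‖ ^ 2 / ZLattice.covolume L := by rw [hw]; ring
    _ ≤ √2 := by rw [div_le_iff₀ hc]; exact hv.le

end Plane

/-- Mahler: For every lattice L in the Euclidean plane,
λ₁(L)·λ₁(L*) ≤ √2. -/
theorem mahler_two_dim (L : Submodule ℤ (EuclideanSpace ℝ (Fin 2)))
    [DiscreteTopology L] [IsZLattice ℝ L] :
    succMin (fun x => ‖x‖) L 1 * succMin (fun x => ‖x‖) (dualLatticeE L) 1 ≤
      Real.sqrt 2 :=
  have : Fact (finrank ℝ (EuclideanSpace ℝ (Fin 2)) = 2) := ⟨finrank_euclideanSpace_fin⟩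
  succMin_one_mul_succMin_one_dualLatticeE_le_sqrt_two L
end
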